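/- arXiv:0901.1451 — 3 statements merged into one kernel-verified Lean document; each statement's English description precedes it below -/
import Mathlib

section
/- Suppose v is an unlooped marked vertex of the marked graph G and no neighbor of v is marked. Then [G] = A·[G − v] + B·[G^v − v], where G − v is obtained from G by removing v and every edge incident on v. -/
open MvPolynomial

/-- A marked graph: a finite vertex set, an adjacency matrix over GF(2)
(the diagonal entry at `v` is 1 iff `v` carries a loop; for `v ≠ w` the `(v,w)` entry
is 1 iff `v` and `w` are adjacent), a designated set of marked vertices, and a number
of free loops. -/
structure MarkedGraph (V : Type) [Fintype V] [DecidableEq V] where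
  adj : Matrix V V (ZMod 2)
  marked : V → Bool
  freeLoops : ℕ

namespace MarkedGraph

variable {V : Type} [Fintype V] [DecidableEq V]

/-- GF(2)-nullity of a square matrix: the dimension of its kernel. -/
noncomputable def nullity {ι : Type*} [Fintype ι] (M : Matrix ι ι (ZMod 2)) : ℕ :=
  Module.finrank (ZMod 2) (LinearMap.ker M.mulVecLin)

/-- The diagonal matrix `Δ_T` over GF(2) whose diagonal entry at `v` is 1 iff `v ∈ T`. -/
def delta (T : Finset V) : Matrix V V (ZMod 2) :=
  Matrix.diagonal fun v => if v ∈ T then 1 else 0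

/-- The vertices kept in the submatrix `𝒜(G)_T`: delete each marked vertex whose
diagonal entry in `𝒜(G) + Δ_T` is 0. -/
def keep (G : MarkedGraph V) (T : Finset V) : Finset V :=
  Finset.univ.filter fun v => ¬ (G.marked v = true ∧ (G.adj + delta T) v v = 0)

/-- The submatrix `𝒜(G)_T` of `𝒜(G) + Δ_T`. -/
def subMat (G : MarkedGraph V) (T : Finset V) :
    Matrix (G.keep T) (G.keep T) (ZMod 2) :=
  fun i j => (G.adj + delta T) i.1 j.1

/-- The marked-graph bracket polynomial `[G] ∈ ℤ[A,B,d]`, where `A = X 0`, `B = X 1`,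
`d = X 2`:  `[G] = d^φ ⬝ Σ_{T ⊆ V(G)} A^(n-|T|) B^(|T|) d^(ν(𝒜(G)_T))`. -/
noncomputable def bracket (G : MarkedGraph V) : MvPolynomial (Fin 3) ℤ :=
  X 2 ^ G.freeLoops *
    ∑ T : Finset V,
      X 0 ^ (Fintype.card V - T.card) * X 1 ^ T.card * X 2 ^ nullity (G.subMat T)

/-- `x` is a neighbor of `v` (no vertex is a neighbor of itself). -/
def nbr (G : MarkedGraph V) (v x : V) : Prop := x ≠ v ∧ G.adj v x = 1

instance (G : MarkedGraph V) (v x : V) : Decidable (G.nbr v x) :=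
  inferInstanceAs (Decidable (x ≠ v ∧ G.adj v x = 1))

/-- Delete the vertices in `s`, together with all incident edges
(marks and free loops unchanged). -/
def delete (G : MarkedGraph V) (s : Finset V) : MarkedGraph {v : V // v ∉ s} where
  adj := fun i j => G.adj i.1 j.1
  marked := fun i => G.marked i.1
  freeLoops := G.freeLoops

/-- The local complement `G^v`: toggle every entry of the adjacency matrix (diagonal
entries included) whose row and column indices are both neighbors of `v`. -/
def localComp (G : MarkedGraph V) (v : V) : MarkedGraph V :=
  { G with adj := fun x y => if G.nbr v x ∧ G.nbr v y then G.adj x y + 1 else G.adj x y }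

/-- `G - {v,v}`: remove the loop at `v` (set the diagonal entry at `v` to 0). -/
def removeLoop (G : MarkedGraph V) (v : V) : MarkedGraph V :=
  { G with adj := fun x y => if x = v ∧ y = v then 0 else G.adj x y }

/-- `G + I`: toggle all loops. -/
def addI (G : MarkedGraph V) : MarkedGraph V :=
  { G with adj := G.adj + 1 }

/-- `G⁺`: adjoin one free loop. -/
def addFreeLoop (G : MarkedGraph V) : MarkedGraph V :=
  { G with freeLoops := G.freeLoops + 1 }

/-- The condition under which the pivot `G^{vw}` toggles the adjacency between `x`
and `y`: `x` is a neighbor of `v`, `y` is a neighbor of `w`, and either `x` is not a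
neighbor of `w` or `y` is not a neighbor of `v`. -/
def pivotCond (G : MarkedGraph V) (v w x y : V) : Prop :=
  G.nbr v x ∧ G.nbr w y ∧ (¬ G.nbr w x ∨ ¬ G.nbr v y)

instance (G : MarkedGraph V) (v w x y : V) : Decidable (G.pivotCond v w x y) :=
  inferInstanceAs (Decidable (G.nbr v x ∧ G.nbr w y ∧ (¬ G.nbr w x ∨ ¬ G.nbr v y)))

/-- The pivot `G^{vw}`: toggle the adjacency between every pair of distinct vertices
`x, y ∉ {v,w}` such that `x` is a neighbor of `v`, `y` is a neighbor of `w`, and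
either `x` is not a neighbor of `w` or `y` is not a neighbor of `v`
(loops are unaffected). -/
def pivot (G : MarkedGraph V) (v w : V) : MarkedGraph V :=
  { G with adj := fun x y =>
      if x ≠ v ∧ x ≠ w ∧ y ≠ v ∧ y ≠ w ∧ x ≠ y ∧
          (G.pivotCond v w x y ∨ G.pivotCond v w y x)
      then G.adj x y + 1 else G.adj x y }

/-- Interchange the neighbors of `v` and `w` in an adjacency matrix, keeping loops
and the edge between `v` and `w` unchanged. -/
def swapAdjacencies (M : Matrix V V (ZMod 2)) (v w : V) : Matrix V V (ZMod 2) :=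
  fun x y =>
    if x = y then M x y
    else if (x = v ∧ y = w) ∨ (x = w ∧ y = v) then M x y
    else M (Equiv.swap v w x) (Equiv.swap v w y)

/-- The marked pivot `G_c^{vw}`: the pivot `G^{vw}` with the marks on `v` and `w`
toggled and the neighbors of `v` and `w` interchanged (loops, the edge between `v`
and `w`, and free loops unchanged). -/
def markedPivot (G : MarkedGraph V) (v w : V) : MarkedGraph V where
  adj := swapAdjacencies (G.pivot v w).adj v w
  marked := fun u => if u = v ∨ u = w then !(G.marked u) else G.marked u
  freeLoops := G.freeLoops

/-- The disjoint union of two marked graphs: block-diagonal adjacency matrix,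
each vertex marked as it was, free loops added. -/
def disjUnion {V₁ V₂ : Type} [Fintype V₁] [DecidableEq V₁] [Fintype V₂] [DecidableEq V₂]
    (G₁ : MarkedGraph V₁) (G₂ : MarkedGraph V₂) : MarkedGraph (V₁ ⊕ V₂) where
  adj := Matrix.fromBlocks G₁.adj 0 0 G₂.adj
  marked := Sum.elim G₁.marked G₂.marked
  freeLoops := G₁.freeLoops + G₂.freeLoops

/-- Remove the three edges `{u,v}`, `{u,w}`, `{v,w}` (all else unchanged). -/
def removeEdges3 (G : MarkedGraph V) (u v w : V) : MarkedGraph V :=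
  { G with adj := fun x y =>
      if (x = u ∧ y = v) ∨ (x = v ∧ y = u) ∨ (x = u ∧ y = w) ∨ (x = w ∧ y = u) ∨
          (x = v ∧ y = w) ∨ (x = w ∧ y = v)
      then 0 else G.adj x y }

/-- Adjoin one isolated, unmarked vertex with no incident edges; it is looped iff
`loop = true`. -/
def addIsolated (G : MarkedGraph V) (loop : Bool) : MarkedGraph (Option V) where
  adj := fun x y =>
    match x, y with
    | some a, some b => G.adj a b
    | none, none => if loop then 1 else 0
    | _, _ => 0
  marked := fun x => match x with | some a => G.marked a | none => false
  freeLoops := G.freeLoops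

/-- The number of vertices of `s` that are adjacent to `x`. -/
def countAdj (G : MarkedGraph V) (x : V) (s : Finset V) : ℕ :=
  (s.filter fun y => G.adj x y = 1).card

/-- The reduced marked-graph bracket `⟨G⟩ ∈ ℤ[A, A⁻¹]`: substitute `B ↦ A⁻¹` and
`d ↦ -A² - A⁻²` in `[G]`. -/
noncomputable def reducedBracket (G : MarkedGraph V) : LaurentPolynomial ℤ :=
  MvPolynomial.aeval
    ![LaurentPolynomial.T 1, LaurentPolynomial.T (-1),
      -LaurentPolynomial.T 2 - LaurentPolynomial.T (-2)] G.bracket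

/-- The number of looped vertices of `G`. -/
def numLoops (G : MarkedGraph V) : ℕ :=
  (Finset.univ.filter fun v => G.adj v v = 1).card

/-- The Jones polynomial `V_G = (-1)^n ⬝ q^(3n-6ℓ) ⬝ ⟨G⟩(q⁻¹)`, as a Laurent
polynomial in the formal variable `q` (representing `t^(1/4)`); substituting
`A ↦ q⁻¹` in `⟨G⟩` amounts to substituting `A ↦ q⁻¹`, `B ↦ q`, `d ↦ -q² - q⁻²`
in `[G]`. -/
noncomputable def jones (G : MarkedGraph V) : LaurentPolynomial ℤ :=
  (-1) ^ Fintype.card V *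
    LaurentPolynomial.T (3 * (Fintype.card V : ℤ) - 6 * (G.numLoops : ℤ)) *
    MvPolynomial.aeval
      ![LaurentPolynomial.T (-1), LaurentPolynomial.T 1,
        -LaurentPolynomial.T 2 - LaurentPolynomial.T (-2)] G.bracket

end MarkedGraph

/-!
Split the sum over `T ⊆ V(G)` according to whether `v ∈ T`. If `v ∉ T`, the diagonal entry of
`𝒜(G) + Δ_T` at the marked vertex `v` is `0`, so `v` is deleted and `𝒜(G)_T = 𝒜(G - v)_T`.
If `v ∈ T`, that entry is `1`; pivoting on it (a Schur complement, which preserves nullity)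
adds `a_{xv} a_{vy}` to every other entry, which is local complementation at `v`, and since the
neighbors of `v` are unmarked, the toggled diagonal entries do not change which vertices are
deleted. So `𝒜(G)_T` has the nullity of `𝒜(G^v - v)_{T - v}`.
-/

open Module Finset

namespace Matrix

variable {K : Type*} [Field K] {ι κ : Type*} [Fintype ι] [Fintype κ]

theorem finrank_ker_mulVecLin_add_rank (M : Matrix ι ι K) :
    finrank K (LinearMap.ker M.mulVecLin) + M.rank = Fintype.card ι := by
  rw [add_comm, rank, LinearMap.finrank_range_add_finrank_ker, finrank_fintype_fun_eq_card]

theorem finrank_ker_mulVecLin_eq_of_equiv {M : Matrix ι ι K} {N : Matrix κ κ K} (e : κ ≃ ι)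
    (h : ∀ x y, N x y = M (e x) (e y)) :
    finrank K (LinearMap.ker N.mulVecLin) = finrank K (LinearMap.ker M.mulVecLin) := by
  have hN : N = M.submatrix e e := ext h
  have := finrank_ker_mulVecLin_add_rank N
  have := finrank_ker_mulVecLin_add_rank M
  have := Fintype.card_congr e
  have := rank_submatrix M e e
  subst hN
  omega

theorem mulVec_eq_zero_iff_of_option_pivot {M : Matrix (Option κ) (Option κ) K}
    {N : Matrix κ κ K} (h : M none none = 1)
    (hN : ∀ x y, N x y = M (some x) (some y) - M (some x) none * M none (some y))
    (u : Option κ → K) :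
    M *ᵥ u = 0 ↔ u none = -∑ y, M none (some y) * u (some y) ∧ N *ᵥ (u ∘ some) = 0 := by
  simp only [funext_iff, Option.forall, Pi.zero_apply, mulVec, dotProduct, Fintype.sum_option, h,
    one_mul, hN, sub_mul, sum_sub_distrib, Function.comp_apply, mul_assoc, ← mul_sum]
  constructor
  · rintro ⟨h0, hs⟩
    have hnone : u none = -∑ y, M none (some y) * u (some y) := by linear_combination h0
    exact ⟨hnone, fun x => by linear_combination hs x - M (some x) none * hnone⟩
  · rintro ⟨hnone, hs⟩
    refine ⟨by linear_combination hnone, fun x => ?_⟩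
    linear_combination hs x + M (some x) none * hnone

theorem finrank_ker_mulVecLin_eq_of_option_pivot {M : Matrix (Option κ) (Option κ) K}
    {N : Matrix κ κ K} (h : M none none = 1)
    (hN : ∀ x y, N x y = M (some x) (some y) - M (some x) none * M none (some y)) :
    finrank K (LinearMap.ker M.mulVecLin) = finrank K (LinearMap.ker N.mulVecLin) := by
  have hmem : ∀ u, u ∈ LinearMap.ker M.mulVecLin ↔
      u none = -∑ y, M none (some y) * u (some y) ∧ u ∘ some ∈ LinearMap.ker N.mulVecLin := by
    simpa only [LinearMap.mem_ker, mulVecLin_apply] using mulVec_eq_zero_iff_of_option_pivot h hN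
  let f := (LinearMap.funLeft K K some).restrict fun u hu => ((hmem u).1 hu).2
  refine (LinearEquiv.ofBijective f ⟨fun u u' huu' => ?_, fun w => ?_⟩).finrank_eq
  · have hsome : u.1 ∘ some = u'.1 ∘ some := congrArg Subtype.val huu'
    ext (_ | x)
    · rw [((hmem _).1 u.2).1, ((hmem _).1 u'.2).1]
      exact congrArg (fun w => -∑ y, M none (some y) * w y) hsome
    · exact congrFun hsome x
  · exact ⟨⟨fun o => o.elim (-∑ y, M none (some y) * w.1 y) w.1, (hmem _).2 ⟨rfl, w.2⟩⟩, rfl⟩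

theorem finrank_ker_mulVecLin_eq_of_pivot [DecidableEq ι] {M : Matrix ι ι K}
    {N : Matrix κ κ K} {p : ι} (hp : M p p = 1) (e : κ ≃ {i // i ≠ p})
    (hN : ∀ x y, N x y = M (e x) (e y) - M (e x) p * M p (e y)) :
    finrank K (LinearMap.ker M.mulVecLin) = finrank K (LinearMap.ker N.mulVecLin) := by
  let g : Option κ ≃ ι := (Equiv.optionCongr e).trans (Equiv.optionSubtypeNe p)
  rw [← finrank_ker_mulVecLin_eq_of_equiv g fun _ _ => rfl]
  exact finrank_ker_mulVecLin_eq_of_option_pivot hp hN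

end Matrix

theorem Finset.sum_finset_eq_sum_add_insert {V M : Type*} [Fintype V] [DecidableEq V]
    [AddCommMonoid M] (v : V) (f : Finset V → M) :
    ∑ T : Finset V, f T = ∑ T : Finset {x // x ∉ ({v} : Finset V)},
      (f (T.map (.subtype _)) + f (insert v (T.map (.subtype _)))) := by
  set e : {x // x ∉ ({v} : Finset V)} ↪ V := .subtype _
  have huniv : (univ : Finset V) = insert v (univ.map e) := by
    ext x
    by_cases h : x = v <;> simp [e, h]
  have hpow : (univ.map e).powerset = univ.map (mapEmbedding e).toEmbedding := by
    ext T
    simp [subset_map_iff, eq_comm]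
  rw [← powerset_univ, huniv, sum_powerset_insert (by simp [e]), ← sum_add_distrib, hpow,
    sum_map]
  rfl

namespace MarkedGraph

theorem delta_apply {V : Type} [DecidableEq V] (T : Finset V) (x y : V) :
    delta T x y = if x = y ∧ x ∈ T then 1 else 0 := by
  simp only [delta, Matrix.diagonal_apply, ite_and]

variable {V : Type} [Fintype V] [DecidableEq V]

theorem mem_keep {G : MarkedGraph V} {T : Finset V} {x : V} :
    x ∈ G.keep T ↔ (G.marked x = true → (G.adj + delta T) x x ≠ 0) := by
  simp [keep]

theorem delete_adj_add_delta (G : MarkedGraph V) (s : Finset V) (T : Finset {x // x ∉ s})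
    (x y : {x // x ∉ s}) :
    ((G.delete s).adj + delta T) x y = (G.adj + delta (T.map (.subtype _))) x y := by
  rw [Matrix.add_apply, Matrix.add_apply]
  simp [delta_apply, delete, x.2, Subtype.ext_iff]

theorem mem_keep_delete {G : MarkedGraph V} {s : Finset V} {T : Finset {x // x ∉ s}}
    {x : {x // x ∉ s}} : x ∈ (G.delete s).keep T ↔ x.1 ∈ G.keep (T.map (.subtype _)) := by
  rw [mem_keep, mem_keep, delete_adj_add_delta]
  rfl

theorem localComp_adj_of_ne {G : MarkedGraph V} (hsym : G.adj.IsSymm) {v x y : V}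
    (hx : x ≠ v) (hy : y ≠ v) :
    (G.localComp v).adj x y = G.adj x y - G.adj x v * G.adj v y := by
  have h01 : ∀ a : ZMod 2, a = 0 ∨ a = 1 := by decide
  rw [hsym.apply v x, CharTwo.sub_eq_add]
  simp only [localComp, nbr, hx, hy, ne_eq, not_false_eq_true, true_and]
  rcases h01 (G.adj v x) with h | h <;> rcases h01 (G.adj v y) with h' | h' <;> simp [h, h']

theorem localComp_adj_add_delta_of_ne {G : MarkedGraph V} (hsym : G.adj.IsSymm) {v x y : V}
    (hx : x ≠ v) (hy : y ≠ v) (T : Finset V) :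
    ((G.localComp v).adj + delta T) x y = (G.adj + delta (insert v T)) x y -
      (G.adj + delta (insert v T)) x v * (G.adj + delta (insert v T)) v y := by
  simp only [Matrix.add_apply, delta_apply, localComp_adj_of_ne hsym hx hy, mem_insert, hx,
    hy.symm, false_or, false_and, if_false, add_zero]
  ring

theorem mem_keep_localComp {G : MarkedGraph V} {v : V}
    (hnbr : ∀ x, G.nbr v x → G.marked x = false) {T : Finset V} {x : V} (hx : x ≠ v) :
    x ∈ (G.localComp v).keep T ↔ x ∈ G.keep (insert v T) := by
  rw [mem_keep, mem_keep, Matrix.add_apply, Matrix.add_apply]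
  by_cases hvx : G.nbr v x
  · simp [hnbr x hvx, localComp]
  · simp [delta_apply, localComp, hvx, hx]

theorem nullity_subMat_delete (G : MarkedGraph V) {v : V} (hunlooped : G.adj v v = 0)
    (hmarked : G.marked v = true) (T : Finset {x // x ∉ ({v} : Finset V)}) :
    nullity ((G.delete {v}).subMat T) = nullity (G.subMat (T.map (.subtype _))) := by
  have hv : ∀ y ∈ G.keep (T.map (.subtype _)), y ∉ ({v} : Finset V) := by
    rintro y hy hyv
    rw [mem_singleton] at hyv
    subst hyv
    exact mem_keep.1 hy hmarked (by simp [Matrix.add_apply, delta_apply, hunlooped])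
  let e : (G.delete {v}).keep T ≃ G.keep (T.map (.subtype _)) :=
    { toFun x := ⟨x.1.1, mem_keep_delete.1 x.2⟩
      invFun y := ⟨⟨y.1, hv y.1 y.2⟩, mem_keep_delete.2 y.2⟩
      left_inv _ := rfl
      right_inv _ := rfl }
  exact Matrix.finrank_ker_mulVecLin_eq_of_equiv e fun x y => delete_adj_add_delta G _ T x y

theorem nullity_subMat_localComp_delete (G : MarkedGraph V) (hsym : G.adj.IsSymm) {v : V}
    (hunlooped : G.adj v v = 0) (hnbr : ∀ x, G.nbr v x → G.marked x = false)
    (T : Finset {x // x ∉ ({v} : Finset V)}) :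
    nullity (((G.localComp v).delete {v}).subMat T) =
      nullity (G.subMat (insert v (T.map (.subtype _)))) := by
  set T₀ := T.map (.subtype _)
  have hne : ∀ x : {x // x ∉ ({v} : Finset V)}, x.1 ≠ v := fun x h => x.2 (by simp [h])
  have hkeep : ∀ x, x ∈ ((G.localComp v).delete {v}).keep T ↔ x.1 ∈ G.keep (insert v T₀) :=
    fun x => mem_keep_delete.trans (mem_keep_localComp hnbr (hne x))
  have hvK : v ∈ G.keep (insert v T₀) :=
    mem_keep.2 fun _ => by simp [Matrix.add_apply, delta_apply, hunlooped]
  have hpivot : G.subMat (insert v T₀) ⟨v, hvK⟩ ⟨v, hvK⟩ = 1 := by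
    simp [subMat, Matrix.add_apply, delta_apply, hunlooped]
  let e : ((G.localComp v).delete {v}).keep T ≃ {y : G.keep (insert v T₀) // y ≠ ⟨v, hvK⟩} :=
    { toFun x := ⟨⟨x.1.1, (hkeep x.1).1 x.2⟩, fun h => hne x.1 (congrArg Subtype.val h)⟩
      invFun y := ⟨⟨y.1.1, by simpa using fun h => y.2 (Subtype.ext h)⟩, (hkeep _).2 y.1.2⟩
      left_inv _ := rfl
      right_inv _ := rfl }
  refine (Matrix.finrank_ker_mulVecLin_eq_of_pivot hpivot e fun x y => ?_).symm
  exact (delete_adj_add_delta _ _ T x.1 y.1).trans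
    (localComp_adj_add_delta_of_ne hsym (hne x.1) (hne y.1) T₀)

end MarkedGraph

/-- If `v` is an unlooped marked vertex with no marked neighbor then
`[G] = A⬝[G - v] + B⬝[G^v - v]`. -/
theorem bracket_unlooped_marked {V : Type} [Fintype V] [DecidableEq V]
    (G : MarkedGraph V) (hsym : G.adj.IsSymm) (v : V)
    (hunlooped : G.adj v v = 0) (hmarked : G.marked v = true)
    (hnbr : ∀ x, G.nbr v x → G.marked x = false) :
    G.bracket =
      X 0 * (G.delete {v}).bracket + X 1 * ((G.localComp v).delete {v}).bracket := by
  have hcard : Fintype.card {x // x ∉ ({v} : Finset V)} = Fintype.card V - 1 := by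
    simp [Fintype.card_subtype_compl]
  have hpos : 0 < Fintype.card V := Fintype.card_pos_iff.2 ⟨v⟩
  simp only [MarkedGraph.bracket, sum_finset_eq_sum_add_insert v, mul_sum, ← sum_add_distrib]
  refine sum_congr rfl fun T _ => ?_
  have hT : T.card ≤ Fintype.card V - 1 := hcard ▸ T.card_le_univ
  obtain ⟨k, hk⟩ : ∃ k, Fintype.card V - T.card = k + 1 :=
    ⟨Fintype.card V - 1 - T.card, by omega⟩
  rw [G.nullity_subMat_delete hunlooped hmarked,
    G.nullity_subMat_localComp_delete hsym hunlooped hnbr, card_insert_of_notMem (by simp),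
    card_map, hcard, hk, show Fintype.card V - 1 - T.card = k by omega,
    show Fintype.card V - (T.card + 1) = k by omega]
  simp only [MarkedGraph.delete, MarkedGraph.localComp]
  ring
end

section
/- Suppose v is a looped marked vertex of the marked graph G (the neighbors of v may be marked or unmarked). Then B·[G] = A·[G − {v,v}] + (B² − A²)·[G − v]. (Equivalently, [G] = AB^{-1}·[G − {v,v}] + (B − A²B^{-1})·[G − v].) -/
open MvPolynomial

/-!
Split the state sum over `T ⊆ V` according to whether `v ∈ T`, and index both halves by
`S ⊆ V ∖ {v}`. The marked vertex `v` has diagonal entry `0` in `𝒜(G) + Δ_{S ∪ v}` (it is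
looped) and in `𝒜(G - {v,v}) + Δ_S`, so it is deleted from both submatrices, leaving
`𝒜(G - v)_S`; moreover `𝒜(G) + Δ_S = 𝒜(G - {v,v}) + Δ_{S ∪ v}`.
With `P = Σ_S A^(n-1-|S|) B^|S| d^ν(𝒜(G - v)_S)` and `Q` the same sum with `ν(𝒜(G)_S)`,
this gives `[G] = d^φ (A Q + B P)`, `[G - {v,v}] = d^φ (A P + B Q)` and `[G - v] = d^φ P`.
-/

namespace Finset

variable {α M : Type*} [Fintype α] [DecidableEq α] [AddCommMonoid M]

lemma sum_map_subtype_eq_sum_powerset_erase (a : α) (g : Finset α → M) :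
    ∑ S : Finset {u // u ∉ ({a} : Finset α)}, g (S.map (.subtype _)) =
      ∑ T ∈ (univ.erase a).powerset, g T := by
  refine sum_nbij' (fun S => S.map (.subtype _)) (fun T => T.subtype _) ?_ ?_ ?_ ?_
    fun _ _ => rfl
  · intro S _
    simpa [subset_iff] using fun x hx _ => hx
  · simp
  · intro S _
    ext x
    simpa using fun _ => by simpa using x.2
  · intro T hT
    ext x
    simpa using fun hx => ne_of_mem_erase (mem_powerset.mp hT hx)

lemma sum_eq_sum_map_subtype_add_insert (a : α) (f : Finset α → M) :
    ∑ T, f T = ∑ S : Finset {u // u ∉ ({a} : Finset α)},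
      (f (S.map (.subtype _)) + f (insert a (S.map (.subtype _)))) := by
  calc ∑ T, f T = ∑ T ∈ (insert a (univ.erase a)).powerset, f T := by
        rw [insert_erase (mem_univ a), powerset_univ]
    _ = _ := by
      rw [sum_powerset_insert (notMem_erase a univ), ← sum_map_subtype_eq_sum_powerset_erase,
        ← sum_map_subtype_eq_sum_powerset_erase, ← sum_add_distrib]

end Finset

namespace MarkedGraph

open Finset

variable {V : Type} [Fintype V] [DecidableEq V]

lemma nullity_eq_card_sub_rank {ι : Type*} [Fintype ι] (M : Matrix ι ι (ZMod 2)) :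
    nullity M = Fintype.card ι - M.rank := by
  have := LinearMap.finrank_range_add_finrank_ker M.mulVecLin
  rw [Module.finrank_fintype_fun_eq_card] at this
  unfold nullity Matrix.rank
  omega

lemma nullity_submatrix_equiv {ι κ : Type*} [Fintype ι] [Fintype κ]
    (N : Matrix κ κ (ZMod 2)) (e : ι ≃ κ) : nullity (N.submatrix e e) = nullity N := by
  rw [nullity_eq_card_sub_rank, nullity_eq_card_sub_rank, Matrix.rank_submatrix,
    Fintype.card_congr e]

lemma nullity_subMat_congr {H H' : MarkedGraph V} {T T' : Finset V}
    (hmarked : H.marked = H'.marked) (hmat : H.adj + delta T = H'.adj + delta T') :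
    nullity (H.subMat T) = nullity (H'.subMat T') := by
  have hkeep : ∀ x, x ∈ H.keep T ↔ x ∈ H'.keep T' := by
    simp only [keep, mem_filter, mem_univ, true_and, hmarked, hmat, implies_true]
  rw [← nullity_submatrix_equiv (H'.subMat T') (Equiv.subtypeEquivRight hkeep)]
  congr
  ext i j
  exact congrFun₂ hmat i j

lemma delete_adj_add_delta_s9 (H : MarkedGraph V) (v : V) {T : Finset V}
    {S : Finset {u // u ∉ ({v} : Finset V)}} (hS : ∀ x, x ∈ S ↔ x.1 ∈ T)
    (x y : {u // u ∉ ({v} : Finset V)}) :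
    ((H.delete {v}).adj + delta S) x y = (H.adj + delta T) x y := by
  change H.adj x y + delta S x y = H.adj x y + delta T x y
  simp only [delta, Matrix.diagonal_apply, Subtype.ext_iff, hS]

lemma nullity_subMat_delete_s9 (H : MarkedGraph V) {v : V} {T : Finset V}
    {S : Finset {u // u ∉ ({v} : Finset V)}} (hS : ∀ x, x ∈ S ↔ x.1 ∈ T)
    (hmarked : H.marked v = true) (hdiag : (H.adj + delta T) v v = 0) :
    nullity (H.subMat T) = nullity ((H.delete {v}).subMat S) := by
  have hkeep : ∀ x, x ∈ (H.delete {v}).keep S ↔ x.1 ∈ H.keep T := by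
    intro x
    simp only [keep, mem_filter, mem_univ, true_and, delete_adj_add_delta_s9 H v hS]
    rfl
  have hne : ∀ x ∈ H.keep T, x ∉ ({v} : Finset V) := by
    intro x hx hxv
    rw [mem_singleton] at hxv
    subst hxv
    exact (mem_filter.mp hx).2 ⟨hmarked, hdiag⟩
  let e : (H.delete {v}).keep S ≃ H.keep T :=
    { toFun := fun x => ⟨x.1.1, (hkeep x.1).1 x.2⟩
      invFun := fun x => ⟨⟨x.1, hne x.1 x.2⟩, (hkeep _).2 x.2⟩
      left_inv := fun _ => rfl
      right_inv := fun _ => rfl }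
  rw [← nullity_submatrix_equiv (H.subMat T) e]
  congr
  ext i j
  exact (delete_adj_add_delta_s9 H v hS i j).symm

lemma bracket_eq_sum_split (H : MarkedGraph V) (v : V) :
    H.bracket = X 2 ^ H.freeLoops * ∑ S : Finset {u // u ∉ ({v} : Finset V)},
      X 0 ^ (Fintype.card {u // u ∉ ({v} : Finset V)} - #S) * X 1 ^ #S *
        (X 0 * X 2 ^ nullity (H.subMat (S.map (.subtype _))) +
          X 1 * X 2 ^ nullity (H.subMat (insert v (S.map (.subtype _))))) := by
  have hcard : Fintype.card {u // u ∉ ({v} : Finset V)} + 1 = Fintype.card V := by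
    rw [Fintype.card_subtype_compl, Fintype.card_coe, card_singleton]
    have := Fintype.card_pos_iff.mpr ⟨v⟩
    omega
  rw [bracket, sum_eq_sum_map_subtype_add_insert v]
  congr 1
  refine sum_congr rfl fun S _ => ?_
  have hS := card_le_univ S
  have hv : v ∉ S.map (.subtype _) := by simp
  rw [card_insert_of_notMem hv, card_map,
    show Fintype.card V - (#S + 1) = Fintype.card {u // u ∉ ({v} : Finset V)} - #S by omega,
    show Fintype.card V - #S = Fintype.card {u // u ∉ ({v} : Finset V)} - #S + 1 by omega]
  ring

lemma removeLoop_delete (G : MarkedGraph V) (v : V) :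
    (G.removeLoop v).delete {v} = G.delete {v} := by
  unfold delete removeLoop
  congr 1
  funext x y
  have hx : (x : V) ≠ v := by simpa using x.2
  simp [hx]

lemma adj_add_delta_eq_removeLoop {G : MarkedGraph V} {v : V} (hlooped : G.adj v v = 1)
    {T : Finset V} (hvT : v ∉ T) :
    G.adj + delta T = (G.removeLoop v).adj + delta (insert v T) := by
  ext x y
  change G.adj x y + delta T x y =
    (if x = v ∧ y = v then 0 else G.adj x y) + delta (insert v T) x y
  by_cases hxy : x = y
  · subst hxy
    by_cases hx : x = v
    · subst hx
      simp [delta, hlooped, hvT]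
    · simp [delta, hx]
  · have : ¬(x = v ∧ y = v) := fun h => hxy (h.1.trans h.2.symm)
    simp [delta, hxy, this]

lemma nullity_subMat_insert_of_looped {G : MarkedGraph V} {v : V} (hlooped : G.adj v v = 1)
    (hmarked : G.marked v = true) (S : Finset {u // u ∉ ({v} : Finset V)}) :
    nullity (G.subMat (insert v (S.map (.subtype _)))) = nullity ((G.delete {v}).subMat S) :=
  nullity_subMat_delete_s9 G (fun x => by simp [show x.1 ≠ v by simpa using x.2]) hmarked
    (by simp [delta, hlooped]; rfl)

lemma nullity_removeLoop_subMat {G : MarkedGraph V} {v : V} (hmarked : G.marked v = true)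
    (S : Finset {u // u ∉ ({v} : Finset V)}) :
    nullity ((G.removeLoop v).subMat (S.map (.subtype _))) =
      nullity ((G.delete {v}).subMat S) := by
  rw [← removeLoop_delete G v]
  refine nullity_subMat_delete_s9 _ (fun _ => (mem_map' _).symm) hmarked ?_
  change (if v = v ∧ v = v then 0 else G.adj v v) + delta _ v v = 0
  simp [delta]

lemma nullity_subMat_eq_removeLoop_insert {G : MarkedGraph V} {v : V}
    (hlooped : G.adj v v = 1) (S : Finset {u // u ∉ ({v} : Finset V)}) :
    nullity (G.subMat (S.map (.subtype _))) =
      nullity ((G.removeLoop v).subMat (insert v (S.map (.subtype _)))) :=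
  nullity_subMat_congr rfl (adj_add_delta_eq_removeLoop hlooped (by simp))

end MarkedGraph

theorem bracket_old_recursion_general {V : Type} [Fintype V] [DecidableEq V]
    (G : MarkedGraph V) (v : V)
    (hlooped : G.adj v v = 1) (hmarked : G.marked v = true) :
    X 1 * G.bracket =
      X 0 * (G.removeLoop v).bracket +
        (X 1 ^ 2 - X 0 ^ 2) * (G.delete {v}).bracket := by
  rw [G.bracket_eq_sum_split v, (G.removeLoop v).bracket_eq_sum_split v, MarkedGraph.bracket]
  simp only [MarkedGraph.nullity_subMat_insert_of_looped hlooped hmarked,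
    MarkedGraph.nullity_removeLoop_subMat hmarked,
    ← MarkedGraph.nullity_subMat_eq_removeLoop_insert hlooped, Finset.mul_sum,
    ← Finset.sum_add_distrib]
  refine Finset.sum_congr rfl fun S _ => ?_
  change X 1 * (X 2 ^ G.freeLoops * _) =
    X 0 * (X 2 ^ G.freeLoops * _) + _ * (X 2 ^ G.freeLoops * _)
  ring

/-- If `v` is a looped marked vertex (neighbors arbitrary) then
`B⬝[G] = A⬝[G - {v,v}] + (B² - A²)⬝[G - v]`. -/
theorem bracket_old_recursion {V : Type} [Fintype V] [DecidableEq V]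
    (G : MarkedGraph V) (hsym : G.adj.IsSymm) (v : V)
    (hlooped : G.adj v v = 1) (hmarked : G.marked v = true) :
    X 1 * G.bracket =
      X 0 * (G.removeLoop v).bracket +
        (X 1 ^ 2 - X 0 ^ 2) * (G.delete {v}).bracket :=
  bracket_old_recursion_general G v hlooped hmarked
end

section
/- Suppose G is a marked graph with two unmarked vertices v and w such that v is looped, w is unlooped, and v and w are adjacent to exactly the same vertices outside {v,w} (v and w themselves may or may not be adjacent to each other). Then ⟨G⟩ = ⟨G − v − w⟩. -/
open MvPolynomial

/-!
Write a state `T ⊆ V` as `T' ∪ (T ∩ {v, w})` with `T' ⊆ V ∖ {v, w}`. Since `v` and `w` are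
unmarked twins, `𝒜(G)_T` is `𝒜(G - v - w)_{T'}` bordered by two copies of the same column `r`,
with corner `[[a, c], [c, b]]` where `c = 𝒜(G)_{vw}` and `(a, b)` runs over `(1, 0)`, `(0, 0)`,
`(1, 1)`, `(0, 1)` as `T ∩ {v, w}` runs over `∅`, `{v}`, `{w}`, `{v, w}`. Over GF(2) the two
corners with `a ≠ b` both have the nullity `k` of the single border with corner `c`, while the
corners `(0, 0)` and `(1, 1)` have nullities `k + 1` and `ν(𝒜(G - v - w)_{T'})` in some order.
With `B = A⁻¹` and `d = -A² - A⁻²` the four states therefore contribute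
`A^m ((A² + A⁻²) d^k + d^(k+1) + d^ν) = A^m d^ν`, which is the contribution of `T'`
to `⟨G - v - w⟩`.
-/

open Matrix

theorem Submodule.finrank_eq_of_invOn {K E F : Type*} [Semiring K] [AddCommMonoid E]
    [Module K E] [AddCommMonoid F] [Module K F] {P : Submodule K E} {Q : Submodule K F}
    (f : E →ₗ[K] F) (g : F →ₗ[K] E) (hf : Set.MapsTo f P Q) (hg : Set.MapsTo g Q P)
    (hfg : Set.InvOn g f P Q) : Module.finrank K P = Module.finrank K Q :=
  (LinearEquiv.ofLinearMap (f.restrict hf) (g.restrict hg)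
    (LinearMap.ext fun y => Subtype.ext (hfg.2 y.2))
    (LinearMap.ext fun x => Subtype.ext (hfg.1 x.2))).finrank_eq

theorem Submodule.finrank_prod {K E F : Type*} [DivisionRing K] [AddCommGroup E] [Module K E]
    [AddCommGroup F] [Module K F] [FiniteDimensional K E] [FiniteDimensional K F]
    (P : Submodule K E) (Q : Submodule K F) :
    Module.finrank K (P.prod Q) = Module.finrank K P + Module.finrank K Q := by
  rw [← Module.finrank_prod]
  exact LinearEquiv.finrank_eq
    { toFun x := (⟨x.1.1, x.2.1⟩, ⟨x.1.2, x.2.2⟩)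
      invFun y := ⟨(y.1, y.2), y.1.2, y.2.2⟩
      map_add' _ _ := rfl
      map_smul' _ _ := rfl
      left_inv _ := rfl
      right_inv _ := rfl }

namespace MarkedGraph

section Border

variable {ι κ : Type*} [Fintype ι] [Fintype κ]

theorem nullity_add_rank (M : Matrix ι ι (ZMod 2)) : nullity M + M.rank = Fintype.card ι := by
  rw [nullity, add_comm, Matrix.rank, LinearMap.finrank_range_add_finrank_ker,
    Module.finrank_fintype_fun_eq_card]

theorem nullity_submatrix (M : Matrix ι ι (ZMod 2)) (e : κ ≃ ι) :
    nullity (M.submatrix e e) = nullity M := by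
  have h := nullity_add_rank (M.submatrix e e)
  rw [rank_submatrix, Fintype.card_congr e, ← nullity_add_rank M] at h
  omega

def borderOne (B : Matrix ι ι (ZMod 2)) (r : ι → ZMod 2) (d : ZMod 2) :
    Matrix (ι ⊕ Unit) (ι ⊕ Unit) (ZMod 2) :=
  fromBlocks B (replicateCol Unit r) (replicateRow Unit r) (of fun _ _ => d)

def borderTwins (B : Matrix ι ι (ZMod 2)) (r : ι → ZMod 2) (a b c : ZMod 2) :
    Matrix (ι ⊕ Fin 2) (ι ⊕ Fin 2) (ZMod 2) :=
  fromBlocks B (replicateCol (Fin 2) r) (replicateRow (Fin 2) r) !![a, c; c, b]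

variable (B : Matrix ι ι (ZMod 2)) (r : ι → ZMod 2)

theorem mem_ker_borderOne {d : ZMod 2} {p : ι ⊕ Unit → ZMod 2} :
    p ∈ LinearMap.ker (borderOne B r d).mulVecLin ↔
      B *ᵥ (p ∘ Sum.inl) + p (Sum.inr ()) • r = 0 ∧
      r ⬝ᵥ (p ∘ Sum.inl) + d * p (Sum.inr ()) = 0 := by
  simp [borderOne, LinearMap.mem_ker, funext_iff, mulVec, dotProduct, Fintype.sum_sum_type,
    fromBlocks, mul_comm _ (r _), and_comm]

theorem mem_ker_borderTwins {a b c : ZMod 2} {p : ι ⊕ Fin 2 → ZMod 2} :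
    p ∈ LinearMap.ker (borderTwins B r a b c).mulVecLin ↔
      B *ᵥ (p ∘ Sum.inl) + (p (Sum.inr 0) + p (Sum.inr 1)) • r = 0 ∧
      r ⬝ᵥ (p ∘ Sum.inl) + a * p (Sum.inr 0) + c * p (Sum.inr 1) = 0 ∧
      r ⬝ᵥ (p ∘ Sum.inl) + c * p (Sum.inr 0) + b * p (Sum.inr 1) = 0 := by
  simp [borderTwins, LinearMap.mem_ker, funext_iff, mulVec, dotProduct, Fintype.sum_sum_type,
    fromBlocks, mul_add, mul_comm _ (r _), add_assoc]

theorem nullity_borderTwins_add_one_left (c : ZMod 2) :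
    nullity (borderTwins B r (c + 1) c c) = nullity (borderOne B r c) := by
  refine Submodule.finrank_eq_of_invOn
    { toFun p := Sum.elim (p ∘ Sum.inl) fun _ => p (Sum.inr 1)
      map_add' _ _ := by ext (_ | _) <;> rfl
      map_smul' _ _ := by ext (_ | _) <;> rfl }
    { toFun q := Sum.elim (q ∘ Sum.inl) ![0, q (Sum.inr ())]
      map_add' _ _ := by ext (_ | j) <;> [rfl; fin_cases j <;> simp]
      map_smul' _ _ := by ext (_ | j) <;> [rfl; fin_cases j <;> simp] } ?_ ?_ ⟨?_, ?_⟩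
  all_goals simp only [Set.MapsTo, Set.LeftInvOn, Set.RightInvOn, SetLike.mem_coe,
    mem_ker_borderTwins, mem_ker_borderOne, LinearMap.coe_mk, AddHom.coe_mk, Sum.elim_comp_inl,
    Sum.elim_inr]
  · rintro p ⟨h1, h2, h3⟩
    have hx : p (Sum.inr 0) = 0 := by grind
    exact ⟨by simpa [hx] using h1, by grind⟩
  · rintro q ⟨h1, h2⟩
    simp only [Matrix.cons_val_zero, Matrix.cons_val_one, zero_add, mul_zero, add_zero]
    exact ⟨h1, h2, h2⟩
  · rintro p ⟨-, h2, h3⟩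
    have hx : p (Sum.inr 0) = 0 := by grind
    ext (i | j)
    · rfl
    · fin_cases j
      · exact hx.symm
      · rfl
  · intro q _
    ext (i | j) <;> rfl

theorem nullity_borderTwins_add_one_add_one (c : ZMod 2) :
    nullity (borderTwins B r (c + 1) (c + 1) c) = nullity B := by
  refine Submodule.finrank_eq_of_invOn
    { toFun p := p ∘ Sum.inl
      map_add' _ _ := rfl
      map_smul' _ _ := rfl }
    { toFun u := Sum.elim u fun _ => r ⬝ᵥ u
      map_add' _ _ := by ext (_ | _) <;> simp [dotProduct_add]
      map_smul' _ _ := by ext (_ | _) <;> simp } ?_ ?_ ⟨?_, ?_⟩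
  all_goals simp only [Set.MapsTo, Set.LeftInvOn, Set.RightInvOn, SetLike.mem_coe,
    mem_ker_borderTwins, LinearMap.mem_ker (f := B.mulVecLin), mulVecLin_apply, LinearMap.coe_mk,
    AddHom.coe_mk, Sum.elim_comp_inl, Sum.elim_inr]
  · rintro p ⟨h1, h2, h3⟩
    have hxy : p (Sum.inr 0) + p (Sum.inr 1) = 0 := by grind
    simpa [hxy] using h1
  · intro u hu
    refine ⟨by simp [hu, CharTwo.add_self_eq_zero], by grind, by grind⟩
  · rintro p ⟨-, h2, h3⟩
    ext (i | j)
    · rfl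
    · fin_cases j <;> simp <;> grind
  · simp

theorem nullity_borderTwins_self (c : ZMod 2) :
    nullity (borderTwins B r c c c) = nullity (borderOne B r c) + 1 := by
  rw [← Module.finrank_self (ZMod 2), ← finrank_top (ZMod 2) (ZMod 2), nullity, nullity,
    ← Submodule.finrank_prod]
  refine Submodule.finrank_eq_of_invOn
    { toFun p := (Sum.elim (p ∘ Sum.inl) fun _ => p (Sum.inr 0) + p (Sum.inr 1), p (Sum.inr 1))
      map_add' _ _ := by ext (_ | _) <;> simp [add_add_add_comm]
      map_smul' _ _ := by ext (_ | _) <;> simp [mul_add] }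
    { toFun q := Sum.elim (q.1 ∘ Sum.inl) ![q.1 (Sum.inr ()) + q.2, q.2]
      map_add' _ _ := by ext (_ | j) <;> [rfl; fin_cases j <;> simp [add_add_add_comm]]
      map_smul' _ _ := by ext (_ | j) <;> [rfl; fin_cases j <;> simp [mul_add]] } ?_ ?_ ⟨?_, ?_⟩
  all_goals simp only [Set.MapsTo, Set.LeftInvOn, Set.RightInvOn, SetLike.mem_coe,
    Submodule.mem_prod, Submodule.mem_top, and_true, mem_ker_borderTwins, mem_ker_borderOne,
    LinearMap.coe_mk, AddHom.coe_mk, Sum.elim_comp_inl, Sum.elim_inr]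
  · rintro p ⟨h1, h2, -⟩
    exact ⟨h1, by grind⟩
  · rintro q ⟨h1, h2⟩
    simp only [Matrix.cons_val_zero, Matrix.cons_val_one, add_assoc, CharTwo.add_self_eq_zero,
      add_zero]
    exact ⟨h1, by grind, by grind⟩
  · intro p _
    ext (i | j)
    · rfl
    · fin_cases j <;> simp [add_assoc, CharTwo.add_self_eq_zero]
  · intro q _
    ext (i | u)
    · rfl
    · simp [add_assoc, CharTwo.add_self_eq_zero]
    · simp

theorem nullity_borderTwins_comm (a b c : ZMod 2) :
    nullity (borderTwins B r a b c) = nullity (borderTwins B r b a c) := by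
  rw [← nullity_submatrix (borderTwins B r a b c)
    (Equiv.sumCongr (Equiv.refl ι) (Equiv.swap 0 1))]
  congr 1
  ext (i | j) (i' | j') <;> try fin_cases j
  all_goals try fin_cases j'
  all_goals simp [borderTwins]

theorem nullity_borderTwins_of_ne {a b : ZMod 2} (c : ZMod 2) (hab : a ≠ b) :
    nullity (borderTwins B r a b c) = nullity (borderOne B r c) := by
  have : (a = c + 1 ∧ b = c) ∨ (a = c ∧ b = c + 1) := by revert a b c; decide
  rcases this with ⟨rfl, rfl⟩ | ⟨rfl, rfl⟩
  · exact nullity_borderTwins_add_one_left B r b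
  · rw [nullity_borderTwins_comm, nullity_borderTwins_add_one_left]

theorem pow_nullity_borderTwins_zero_add_pow_nullity_borderTwins_one {R : Type*} [Monoid R]
    [AddCommMagma R] (d : R) (c : ZMod 2) :
    d ^ nullity (borderTwins B r 0 0 c) + d ^ nullity (borderTwins B r 1 1 c) =
      d ^ (nullity (borderOne B r c) + 1) + d ^ nullity B := by
  obtain rfl | rfl : c = 0 ∨ c = 1 := by revert c; decide
  · rw [show (1 : ZMod 2) = 0 + 1 from rfl, nullity_borderTwins_self,
      nullity_borderTwins_add_one_add_one]
  · rw [show (0 : ZMod 2) = 1 + 1 from rfl, nullity_borderTwins_add_one_add_one,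
      nullity_borderTwins_self, add_comm]

end Border

section Lift

variable {V : Type} [DecidableEq V] {v w : V}

def liftT (v w : V) (T' : Finset {x : V // x ∉ ({v, w} : Finset V)}) (bv bw : Bool) :
    Finset V :=
  T'.map (Function.Embedding.subtype _) ∪
    ((if bv then {v} else ∅) ∪ (if bw then {w} else ∅))

variable {T' : Finset {x : V // x ∉ ({v, w} : Finset V)}} {bv bw : Bool}

@[simp]
theorem val_mem_liftT (a : {x : V // x ∉ ({v, w} : Finset V)}) :
    a.1 ∈ liftT v w T' bv bw ↔ a ∈ T' := by
  have hav : a.1 ≠ v := fun h => a.2 (by simp [h])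
  have haw : a.1 ≠ w := fun h => a.2 (by simp [h])
  cases bv <;> cases bw <;> simp [liftT, hav, haw]

theorem left_mem_liftT (hvw : v ≠ w) : v ∈ liftT v w T' bv bw ↔ bv = true := by
  cases bv <;> cases bw <;> simp [liftT, hvw]

theorem right_mem_liftT (hvw : v ≠ w) : w ∈ liftT v w T' bv bw ↔ bw = true := by
  cases bv <;> cases bw <;> simp [liftT, hvw.symm]

theorem card_liftT (hvw : v ≠ w) :
    (liftT v w T' bv bw).card = T'.card + bv.toNat + bw.toNat := by
  have hv : v ∉ T'.map (Function.Embedding.subtype _) := by simp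
  have hw : w ∉ T'.map (Function.Embedding.subtype _) := by simp
  cases bv <;> cases bw <;> simp [liftT, hv, hw, hvw]

def liftEquiv (hvw : v ≠ w) :
    Finset {x : V // x ∉ ({v, w} : Finset V)} × Bool × Bool ≃ Finset V where
  toFun z := liftT v w z.1 z.2.1 z.2.2
  invFun T := (T.subtype _, decide (v ∈ T), decide (w ∈ T))
  left_inv z := by
    ext
    · simp
    · simp [left_mem_liftT hvw]
    · simp [right_mem_liftT hvw]
  right_inv T := by
    ext x
    by_cases hxv : x = v
    · simp [hxv, left_mem_liftT hvw]
    by_cases hxw : x = w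
    · simp [hxw, right_mem_liftT hvw]
    simpa using val_mem_liftT (T' := T.subtype _) ⟨x, by simp [hxv, hxw]⟩

end Lift

section Twins

variable {V : Type} [Fintype V] [DecidableEq V] (G : MarkedGraph V) {v w : V}
  {T' : Finset {x : V // x ∉ ({v, w} : Finset V)}} {bv bw : Bool}

theorem mem_keep_of_marked_eq_false (h : G.marked v = false) (T : Finset V) : v ∈ G.keep T := by
  simp [keep, h]

theorem val_mem_keep_liftT (a : {x : V // x ∉ ({v, w} : Finset V)}) :
    a.1 ∈ G.keep (liftT v w T' bv bw) ↔ a ∈ (G.delete {v, w}).keep T' := by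
  simp only [keep, Matrix.add_apply]
  simp [delete, delta]

def keepLiftEquiv (hvw : v ≠ w) (hmv : G.marked v = false) (hmw : G.marked w = false) :
    {a // a ∈ (G.delete {v, w}).keep T'} ⊕ Fin 2 ≃
      {x // x ∈ G.keep (liftT v w T' bv bw)} where
  toFun := Sum.elim (fun a => ⟨a.1.1, (G.val_mem_keep_liftT a.1).2 a.2⟩)
    ![⟨v, G.mem_keep_of_marked_eq_false hmv _⟩, ⟨w, G.mem_keep_of_marked_eq_false hmw _⟩]
  invFun x :=
    if hxv : x.1 = v then Sum.inr 0
    else if hxw : x.1 = w then Sum.inr 1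
    else Sum.inl ⟨⟨x.1, by simp [hxv, hxw]⟩, (G.val_mem_keep_liftT ⟨x.1, _⟩).1 x.2⟩
  left_inv := by
    rintro (a | j)
    · have hav : a.1.1 ≠ v := fun h => a.1.2 (by simp [h])
      have haw : a.1.1 ≠ w := fun h => a.1.2 (by simp [h])
      simp [hav, haw]
    · fin_cases j <;> simp [hvw.symm]
  right_inv x := by
    by_cases hxv : x.1 = v
    · simp [hxv]; ext; exact hxv.symm
    by_cases hxw : x.1 = w
    · simp [hxw, hvw.symm]; ext; exact hxw.symm
    simp [hxv, hxw]

theorem subMat_apply {T : Finset V} (i j : G.keep T) :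
    G.subMat T i j = G.adj i j + if (i : V) = j ∧ (i : V) ∈ T then 1 else 0 := by
  by_cases h : (i : V) = j <;> simp [subMat, delta, h]

theorem delete_adj (s : Finset V) (i j : {x // x ∉ s}) : (G.delete s).adj i j = G.adj i j := rfl

theorem nullity_subMat_liftT (hsym : G.adj.IsSymm) (hvw : v ≠ w) (hmv : G.marked v = false)
    (hmw : G.marked w = false) (hsame : ∀ x, x ≠ v → x ≠ w → G.adj v x = G.adj w x) :
    nullity (G.subMat (liftT v w T' bv bw)) =
      nullity (borderTwins ((G.delete {v, w}).subMat T') (fun a => G.adj v a.1.1)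
        (G.adj v v + if bv then 1 else 0) (G.adj w w + if bw then 1 else 0) (G.adj v w)) := by
  rw [← nullity_submatrix _ (G.keepLiftEquiv hvw hmv hmw)]
  congr 1
  have hsv : ∀ x, G.adj x v = G.adj v x := fun x => hsym.apply v x
  have hsw : ∀ x, G.adj x w = G.adj w x := fun x => hsym.apply w x
  ext (⟨⟨a, ha⟩, -⟩ | j) (⟨⟨b, hb⟩, -⟩ | j')
  · simp [keepLiftEquiv, subMat_apply, borderTwins, delete_adj, val_mem_liftT ⟨a, ha⟩]
  · simp only [Finset.mem_insert, Finset.mem_singleton, not_or] at ha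
    fin_cases j' <;> simp [keepLiftEquiv, subMat_apply, borderTwins, ha, hsv a,
      (hsw a).trans (hsame a ha.1 ha.2).symm]
  · simp only [Finset.mem_insert, Finset.mem_singleton, not_or] at hb
    fin_cases j <;> simp [keepLiftEquiv, subMat_apply, borderTwins, Ne.symm hb.1, Ne.symm hb.2,
      (hsame b hb.1 hb.2).symm]
  · fin_cases j <;> fin_cases j' <;> simp [keepLiftEquiv, subMat_apply, borderTwins, hvw,
      hvw.symm, left_mem_liftT hvw, right_mem_liftT hvw, hsv]

open LaurentPolynomial

theorem reducedBracket_eq_sum :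
    G.reducedBracket = (-T 2 - T (-2)) ^ G.freeLoops *
      ∑ S : Finset V, T ((Fintype.card V : ℤ) - 2 * S.card) *
        (-T 2 - T (-2)) ^ nullity (G.subMat S) := by
  simp only [reducedBracket, bracket, map_mul, map_pow, map_sum, aeval_X, Matrix.cons_val_zero,
    Matrix.cons_val_one, Matrix.cons_val_two, Matrix.head_cons, Matrix.tail_cons]
  congr 1
  refine Finset.sum_congr rfl fun S _ => ?_
  rw [T_pow, T_pow, ← T_add, Nat.cast_sub (Finset.card_le_univ S)]
  ring_nf

theorem sum_liftT (hsym : G.adj.IsSymm) (hvw : v ≠ w) (hmv : G.marked v = false)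
    (hmw : G.marked w = false) (hv : G.adj v v = 1) (hw : G.adj w w = 0)
    (hsame : ∀ x, x ≠ v → x ≠ w → G.adj v x = G.adj w x) :
    ∑ bv, ∑ bw,
        (T ((Fintype.card V : ℤ) - 2 * (liftT v w T' bv bw).card) : LaurentPolynomial ℤ) *
          (-T 2 - T (-2)) ^ nullity (G.subMat (liftT v w T' bv bw)) =
      T ((Fintype.card {x : V // x ∉ ({v, w} : Finset V)} : ℤ) - 2 * T'.card) *
        (-T 2 - T (-2)) ^ nullity ((G.delete {v, w}).subMat T') := by
  have hcard : (Fintype.card V : ℤ) = Fintype.card {x : V // x ∉ ({v, w} : Finset V)} + 2 := by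
    rw [Fintype.card_subtype_compl, Fintype.card_coe, Finset.card_pair hvw,
      Nat.cast_sub (by simpa [Finset.card_pair hvw] using Finset.card_le_univ {v, w})]
    ring
  simp only [Fintype.sum_bool, card_liftT hvw, nullity_subMat_liftT G hsym hvw hmv hmw hsame, hv,
    hw, if_true, Bool.false_eq_true, if_false, Bool.toNat_true, Bool.toNat_false, add_zero,
    zero_add]
  set m := (Fintype.card {x : V // x ∉ ({v, w} : Finset V)} : ℤ) - 2 * T'.card
  have hpair := pow_nullity_borderTwins_zero_add_pow_nullity_borderTwins_one
    ((G.delete {v, w}).subMat T') (fun a => G.adj v a.1.1) (-T 2 - T (-2) : LaurentPolynomial ℤ)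
    (G.adj v w)
  rw [show (1 + 1 : ZMod 2) = 0 from rfl, nullity_borderTwins_of_ne _ _ _ zero_ne_one,
    nullity_borderTwins_of_ne _ _ _ one_ne_zero]
  rw [show (Fintype.card V : ℤ) - 2 * ↑(T'.card + 1 + 1) = m + -2 by push_cast; linarith,
    show (Fintype.card V : ℤ) - 2 * ↑(T'.card + 1) = m by push_cast; linarith,
    show (Fintype.card V : ℤ) - 2 * ↑T'.card = m + 2 by linarith, T_add, T_add]
  linear_combination T m * hpair

end Twins

end MarkedGraph

/-- If `v` and `w` are unmarked vertices, `v` looped, `w` unlooped,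
adjacent to exactly the same vertices outside `{v,w}`, then `⟨G⟩ = ⟨G - v - w⟩`. -/
theorem reducedBracket_omega2a {V : Type} [Fintype V] [DecidableEq V]
    (G : MarkedGraph V) (hsym : G.adj.IsSymm) (v w : V) (hvw : v ≠ w)
    (hmv : G.marked v = false) (hmw : G.marked w = false)
    (hv : G.adj v v = 1) (hw : G.adj w w = 0)
    (hsame : ∀ x, x ≠ v → x ≠ w → G.adj v x = G.adj w x) :
    G.reducedBracket = (G.delete {v, w}).reducedBracket := by
  rw [G.reducedBracket_eq_sum, MarkedGraph.reducedBracket_eq_sum,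
    ← (MarkedGraph.liftEquiv hvw).sum_comp]
  simp only [Fintype.sum_prod_type, MarkedGraph.liftEquiv, Equiv.coe_fn_mk]
  exact congrArg _ (Finset.sum_congr rfl fun T' _ => G.sum_liftT hsym hvw hmv hmw hv hw hsame)
end
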